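/- Let (G,Ω) be a transitive and ample ℓ-permutation group, let Δ ∈ T and Γ ∈ π(Δ). If Δ is not a minimal element of T, then rst(Γ) ≠ 1. -/
import Mathlib


/-!  Common framework for ℓ-permutation groups on a totally ordered set. -/

namespace LPerm

variable {Ω : Type*} [LinearOrder Ω]

/-- Pointwise join of two order automorphisms of a totally ordered set. -/
def autSup (f g : Ω ≃o Ω) : Ω ≃o Ω :=
  Equiv.toOrderIso
    { toFun := fun α => max (f α) (g α)
      invFun := fun α => min (f.symm α) (g.symm α)
      left_inv := by
        intro α
        dsimp only
        rcases le_total (f α) (g α) with h | h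
        · rw [max_eq_right h]
          have h1 : α ≤ f.symm (g α) := by
            have := f.symm.monotone h
            simpa using this
          rw [g.symm_apply_apply, min_eq_right h1]
        · rw [max_eq_left h]
          have h1 : α ≤ g.symm (f α) := by
            have := g.symm.monotone h
            simpa using this
          rw [f.symm_apply_apply, min_eq_left h1]
      right_inv := by
        intro α
        dsimp only
        rcases le_total (f.symm α) (g.symm α) with h | h
        · rw [min_eq_left h]
          have h1 : g (f.symm α) ≤ α := by
            have := g.monotone h
            simpa using this
          rw [f.apply_symm_apply, max_eq_left h1]
        · rw [min_eq_right h]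
          have h1 : f (g.symm α) ≤ α := by
            have := f.monotone h
            simpa using this
          rw [g.apply_symm_apply, max_eq_right h1] }
    (f.monotone.max g.monotone)
    (f.symm.monotone.min g.symm.monotone)

/-- Pointwise meet of two order automorphisms of a totally ordered set. -/
def autInf (f g : Ω ≃o Ω) : Ω ≃o Ω :=
  Equiv.toOrderIso
    { toFun := fun α => min (f α) (g α)
      invFun := fun α => max (f.symm α) (g.symm α)
      left_inv := by
        intro α
        dsimp only
        rcases le_total (f α) (g α) with h | h
        · rw [min_eq_left h]
          have h1 : g.symm (f α) ≤ α := by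
            have := g.symm.monotone h
            simpa using this
          rw [f.symm_apply_apply, max_eq_left h1]
        · rw [min_eq_right h]
          have h1 : f.symm (g α) ≤ α := by
            have := f.symm.monotone h
            simpa using this
          rw [g.symm_apply_apply, max_eq_right h1]
      right_inv := by
        intro α
        dsimp only
        rcases le_total (f.symm α) (g.symm α) with h | h
        · rw [max_eq_right h]
          have h1 : α ≤ f (g.symm α) := by
            have := f.monotone h
            simpa using this
          rw [g.apply_symm_apply, min_eq_right h1]
        · rw [max_eq_left h]
          have h1 : α ≤ g (f.symm α) := by
            have := g.monotone h
            simpa using this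
          rw [f.apply_symm_apply, min_eq_left h1] }
    (f.monotone.min g.monotone)
    (f.symm.monotone.max g.symm.monotone)


/-- The pointwise order on order automorphisms: `f ≤ g` iff `f α ≤ g α` for all `α`. -/
def autLe (f g : Ω ≃o Ω) : Prop := ∀ α : Ω, f α ≤ g α

/-- `|g| = g ∨ g⁻¹`. -/
def autAbs (g : Ω ≃o Ω) : Ω ≃o Ω := autSup g g⁻¹

/-- The support of an automorphism. -/
def supp (g : Ω ≃o Ω) : Set Ω := {α | g α ≠ α}

/-- Conjugation, written `h^g = g⁻¹ h g` in the paper. -/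
def aconj (h g : Ω ≃o Ω) : Ω ≃o Ω := g⁻¹ * h * g

/-- The commutator `[a,b] = a⁻¹ b⁻¹ a b`. -/
def pcomm (a b : Ω ≃o Ω) : Ω ≃o Ω := a⁻¹ * b⁻¹ * a * b

/-- `G` is closed under the pointwise lattice operations, i.e. `(G,Ω)` is an
ℓ-permutation group. -/
def SublatticeClosed (G : Subgroup (Ω ≃o Ω)) : Prop :=
  ∀ f g : Ω ≃o Ω, f ∈ G → g ∈ G → autSup f g ∈ G ∧ autInf f g ∈ G

/-- `(G,Ω)` is transitive. -/
def IsTransitive (G : Subgroup (Ω ≃o Ω)) : Prop :=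
  ∀ α β : Ω, ∃ g ∈ G, g α = β

/-- `(G,Ω)` is o-2 transitive. -/
def IsO2Transitive (G : Subgroup (Ω ≃o Ω)) : Prop :=
  ∀ α₁ α₂ β₁ β₂ : Ω, α₁ < α₂ → β₁ < β₂ → ∃ g ∈ G, g α₁ = β₁ ∧ g α₂ = β₂

/-- A convex `G`-congruence: an equivalence relation with convex classes which is
preserved by the action of `G`. -/
def IsConvexCongruence (G : Subgroup (Ω ≃o Ω)) (r : Ω → Ω → Prop) : Prop :=
  Equivalence r ∧ (∀ α β γ : Ω, r α γ → α ≤ β → β ≤ γ → r α β) ∧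
    ∀ g ∈ G, ∀ α β : Ω, r α β → r (g α) (g β)

/-- `V(α,β)`: the intersection of all convex `G`-congruences under which `α` and `β`
are equivalent. -/
def Vcong (G : Subgroup (Ω ≃o Ω)) (α β : Ω) : Ω → Ω → Prop :=
  fun γ δ => ∀ r : Ω → Ω → Prop, IsConvexCongruence G r → r α β → r γ δ

/-- Membership in the spine `𝔎` of `(G,Ω)`. -/
def SpineMem (G : Subgroup (Ω ≃o Ω)) (r : Ω → Ω → Prop) : Prop :=
  ∃ α β : Ω, α ≠ β ∧ r = Vcong G α β

/-- Inclusion of relations. -/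
def relLe (r s : Ω → Ω → Prop) : Prop := ∀ x y : Ω, r x y → s x y

/-- `Δ ∈ T`: `Δ` is an o-block (class) of a member of the spine `𝔎`. -/
def InT (G : Subgroup (Ω ≃o Ω)) (Δ : Set Ω) : Prop :=
  ∃ r : Ω → Ω → Prop, SpineMem G r ∧ ∃ δ : Ω, Δ = {γ | r δ γ}

/-- `Δ` is a class (o-block) of the relation `r`. -/
def IsBlockOf (r : Ω → Ω → Prop) (Δ : Set Ω) : Prop :=
  ∃ δ : Ω, Δ = {γ | r δ γ}

/-- The restricted stabiliser `rst(S) = {g ∈ G ∣ supp g ⊆ S}`. -/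
def rst (G : Subgroup (Ω ≃o Ω)) (S : Set Ω) : Set (Ω ≃o Ω) :=
  {g | g ∈ G ∧ supp g ⊆ S}

/-- The (setwise) stabiliser `st(Δ) = {g ∈ G ∣ Δg = Δ}`. -/
def stab (G : Subgroup (Ω ≃o Ω)) (Δ : Set Ω) : Set (Ω ≃o Ω) :=
  {g | g ∈ G ∧ g '' Δ = Δ}

/-- `Q_Δ = {h ∈ rst(Δ) ∣ ∃ α ∈ Δ, V(α, αh) = κ(Δ)}`; since `κ(Δ)` is the unique
convex congruence having `Δ` as a class, the condition `V(α,αh) = κ(Δ)` says exactly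
that `Δ` is the class of `V(α, αh)` containing `α`. -/
def Qset (G : Subgroup (Ω ≃o Ω)) (Δ : Set Ω) : Set (Ω ≃o Ω) :=
  {h | h ∈ rst G Δ ∧ ∃ α ∈ Δ, Δ = {γ | Vcong G α (h α) α γ}}

/-- `(G,Ω)` is ample: `Q_Δ ≠ ∅` for every `Δ ∈ T`. -/
def Ample (G : Subgroup (Ω ≃o Ω)) : Prop :=
  ∀ Δ : Set Ω, InT G Δ → (Qset G Δ).Nonempty

/-- `(G,Ω)` is abundant: for every `Δ ∈ T` and `g ∈ st(Δ)`, the automorphism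
`dep(g,Δ)` agreeing with `g` on `Δ` and with the identity elsewhere lies in `G`. -/
def Abundant (G : Subgroup (Ω ≃o Ω)) : Prop :=
  ∀ Δ : Set Ω, InT G Δ → ∀ g ∈ stab G Δ,
    ∃ g₀ ∈ G, (∀ α ∈ Δ, g₀ α = g α) ∧ ∀ α ∉ Δ, g₀ α = α

/-- The spine `𝔎` has no minimal element. -/
def SpineNoMin (G : Subgroup (Ω ≃o Ω)) : Prop :=
  ∀ r : Ω → Ω → Prop, SpineMem G r →
    ∃ r' : Ω → Ω → Prop, SpineMem G r' ∧ relLe r' r ∧ r' ≠ r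

/-- `Δ` is a minimal element of `T`. -/
def MinimalInT (G : Subgroup (Ω ≃o Ω)) (Δ : Set Ω) : Prop :=
  InT G Δ ∧ ∀ Δ' : Set Ω, InT G Δ' → Δ' ⊆ Δ → Δ' = Δ

/-- Hypothesis (†): if `T` has a minimal element `Δ₀`, then every (nondegenerate
bounded) interval of `Δ₀` supports a non-trivial element of `G`. -/
def Dagger (G : Subgroup (Ω ≃o Ω)) : Prop :=
  ∀ Δ₀ : Set Ω, MinimalInT G Δ₀ → ∀ α β : Ω, α ∈ Δ₀ → β ∈ Δ₀ → α < β →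
    ∃ g : Ω ≃o Ω, g ∈ G ∧ g ≠ 1 ∧ supp g ⊆ Set.Ioo α β

/-- `X_h = {[h⁻¹, h^g] ∣ g ∈ G}`. -/
def Xset (G : Subgroup (Ω ≃o Ω)) (h : Ω ≃o Ω) : Set (Ω ≃o Ω) :=
  {x | ∃ g ∈ G, x = pcomm h⁻¹ (aconj h g)}

/-- `W_h = ⋃ {X_{h^g} ∣ g ∈ G, [X_h, X_{h^g}] ≠ 1}`. -/
def Wset (G : Subgroup (Ω ≃o Ω)) (h : Ω ≃o Ω) : Set (Ω ≃o Ω) :=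
  {x | ∃ g ∈ G, (∃ a ∈ Xset G h, ∃ b ∈ Xset G (aconj h g), pcomm a b ≠ 1) ∧
    x ∈ Xset G (aconj h g)}

/-- The centraliser of a subset `S` in `G`. -/
def cent (G : Subgroup (Ω ≃o Ω)) (S : Set (Ω ≃o Ω)) : Set (Ω ≃o Ω) :=
  {f | f ∈ G ∧ ∀ s ∈ S, s * f = f * s}

/-- The double centraliser of a subset `S` in `G`. -/
def cent2 (G : Subgroup (Ω ≃o Ω)) (S : Set (Ω ≃o Ω)) : Set (Ω ≃o Ω) :=
  cent G (cent G S)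

/-- The pointwise stabiliser in `G` of a subset `S ⊆ Ω`. -/
def ptStab (G : Subgroup (Ω ≃o Ω)) (S : Set Ω) : Set (Ω ≃o Ω) :=
  {f | f ∈ G ∧ ∀ α ∈ S, f α = α}

/-- The congruence covered by `K`: the union of all convex `G`-congruences properly
contained in `K`. -/
def coveredRel (G : Subgroup (Ω ≃o Ω)) (K : Ω → Ω → Prop) : Ω → Ω → Prop :=
  fun γ δ => ∃ r : Ω → Ω → Prop, IsConvexCongruence G r ∧ relLe r K ∧ r ≠ K ∧ r γ δ

/-- `Γ ∈ π(Δ)`, where `K = κ(Δ)`: `Γ` is a class of the congruence covered by `K`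
contained in `Δ`. -/
def InPi (G : Subgroup (Ω ≃o Ω)) (K : Ω → Ω → Prop) (Δ Γ : Set Ω) : Prop :=
  ∃ δ ∈ Δ, Γ = {γ | coveredRel G K δ γ}

/-- An irreducible element of `G`. -/
def IsIrreducibleElt (G : Subgroup (Ω ≃o Ω)) (g : Ω ≃o Ω) : Prop :=
  autLe 1 g ∧ g ≠ 1 ∧
    ∀ g₁ g₂ : Ω ≃o Ω, g₁ ∈ G → g₂ ∈ G → autSup g₁ g₂ = g → autInf g₁ g₂ = 1 →
      g₁ = 1 ∨ g₂ = 1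

/-- `(G,Ω)` is controlled. -/
def Controlled (G : Subgroup (Ω ≃o Ω)) : Prop :=
  ∀ Δ : Set Ω, InT G Δ → ¬ MinimalInT G Δ → ∀ g ∈ rst G Δ,
    (∃ δ ∈ Δ ∩ supp g, Δ = {γ | Vcong G δ (g δ) δ γ}) ∨
      ∃ Δ' : Set Ω, InT G Δ' ∧ supp g ⊆ Δ' ∧ Δ' ⊂ Δ


/-- Auxiliary: equality is a convex `G`-congruence. -/
lemma eq_isConvexCongruence (G : Subgroup (Ω ≃o Ω)) :
    IsConvexCongruence G (fun a b : Ω => a = b) := by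
  refine ⟨⟨fun _ => rfl, fun h => h.symm, fun h h' => h.trans h'⟩, ?_, ?_⟩
  · intro α β γ h h1 h2
    exact le_antisymm h1 (h ▸ h2)
  · intro g _ α β h
    rw [h]

/-- Auxiliary: `Vcong G α β` is a convex `G`-congruence. -/
lemma vcong_isConvexCongruence (G : Subgroup (Ω ≃o Ω)) (α β : Ω) :
    IsConvexCongruence G (Vcong G α β) := by
  refine ⟨⟨?_, ?_, ?_⟩, ?_, ?_⟩
  · intro x r hr hab; exact hr.1.refl x
  · intro x y h r hr hab; exact hr.1.symm (h r hr hab)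
  · intro x y z h h' r hr hab; exact hr.1.trans (h r hr hab) (h' r hr hab)
  · intro x y z h h1 h2 r hr hab; exact hr.2.1 x y z (h r hr hab) h1 h2
  · intro g hg x y h r hr hab; exact hr.2.2 g hg x y (h r hr hab)

/-- Auxiliary: `Vcong G α β α β` holds. -/
lemma vcong_self (G : Subgroup (Ω ≃o Ω)) (α β : Ω) : Vcong G α β α β :=
  fun _ _ hab => hab

/-- Auxiliary: `Vcong G α β` is below any convex congruence relating `α` and `β`. -/
lemma vcong_le (G : Subgroup (Ω ≃o Ω)) {α β : Ω} {r : Ω → Ω → Prop}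
    (hr : IsConvexCongruence G r) (hab : r α β) : relLe (Vcong G α β) r :=
  fun _ _ h => h r hr hab

/-- Auxiliary: if `Vcong G α α x y` then `x = y`. -/
lemma vcong_diag (G : Subgroup (Ω ≃o Ω)) {α x y : Ω} (h : Vcong G α α x y) : x = y :=
  h (fun a b => a = b) (eq_isConvexCongruence G) rfl

/-- (Lemma 2.3 of the paper.)  Here `K = κ(Δ)` is the convex
congruence having `Δ` as a class and `Γ ∈ π(Δ)`. -/
theorem rst_nontrivial_of_not_minimal {Ω : Type*} [LinearOrder Ω]
    (G : Subgroup (Ω ≃o Ω)) (hlat : SublatticeClosed G)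
    (htrans : IsTransitive G) (hample : Ample G)
    (Δ : Set Ω) (hΔ : InT G Δ)
    (K : Ω → Ω → Prop) (hK : IsConvexCongruence G K) (hKΔ : IsBlockOf K Δ)
    (Γ : Set Ω) (hΓ : InPi G K Δ Γ)
    (hmin : ¬ MinimalInT G Δ) :
    rst G Γ ≠ {1} := by
  -- From non-minimality, get a member of `T` properly contained in `Δ`.
  have hex : ∃ Δ₁ : Set Ω, InT G Δ₁ ∧ Δ₁ ⊆ Δ ∧ Δ₁ ≠ Δ := by
    by_contra hcon
    push_neg at hcon
    exact hmin ⟨hΔ, hcon⟩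
  obtain ⟨Δ₁, hΔ₁T, hsub, hne⟩ := hex
  obtain ⟨r₁, hr₁spine, δ₁, hΔ₁eq⟩ := hΔ₁T
  obtain ⟨α₁, β₁, hαβ₁, rfl⟩ := hr₁spine
  have hr₁cc := vcong_isConvexCongruence G α₁ β₁
  obtain ⟨g, hgG, hgα⟩ := htrans α₁ δ₁
  have hβne : δ₁ ≠ g β₁ := by
    intro h
    apply hαβ₁
    apply g.injective
    rw [hgα, ← h]
  -- `δ₁` and `g β₁` are two distinct points of `Δ₁`.
  have hr₁pair : Vcong G α₁ β₁ δ₁ (g β₁) := by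
    have := hr₁cc.2.2 g hgG α₁ β₁ (vcong_self G α₁ β₁)
    rwa [hgα] at this
  have hαΔ₁ : δ₁ ∈ Δ₁ := by rw [hΔ₁eq]; exact hr₁cc.1.refl δ₁
  have hβΔ₁ : g β₁ ∈ Δ₁ := by rw [hΔ₁eq]; exact hr₁pair
  have hVcc := vcong_isConvexCongruence G δ₁ (g β₁)
  have hVr₁ : relLe (Vcong G δ₁ (g β₁)) (Vcong G α₁ β₁) := vcong_le G hr₁cc hr₁pair
  obtain ⟨δ₀, hΔeq⟩ := hKΔ
  have hKδ₀ : ∀ γ ∈ Δ, K δ₀ γ := by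
    intro γ hγ
    rw [hΔeq] at hγ
    exact hγ
  have hKαβ : K δ₁ (g β₁) :=
    hK.1.trans (hK.1.symm (hKδ₀ δ₁ (hsub hαΔ₁))) (hKδ₀ (g β₁) (hsub hβΔ₁))
  have hVK : relLe (Vcong G δ₁ (g β₁)) K := vcong_le G hK hKαβ
  have hVneK : Vcong G δ₁ (g β₁) ≠ K := by
    intro hVeq
    apply hne
    apply Set.Subset.antisymm hsub
    intro γ hγ
    rw [hΔ₁eq]
    have hK1 : K δ₁ γ := hK.1.trans (hK.1.symm (hKδ₀ δ₁ (hsub hαΔ₁))) (hKδ₀ γ hγ)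
    have hV1 : Vcong G δ₁ (g β₁) δ₁ γ := by rw [hVeq]; exact hK1
    exact hVr₁ _ _ hV1
  -- Translate the pair into `Γ`.
  obtain ⟨δ, hδΔ, hΓeq⟩ := hΓ
  obtain ⟨g', hg'G, hg'⟩ := htrans δ₁ δ
  have hV' : Vcong G δ₁ (g β₁) δ (g' (g β₁)) := by
    have := hVcc.2.2 g' hg'G δ₁ (g β₁) (vcong_self G δ₁ (g β₁))
    rwa [hg'] at this
  have hδβ'' : δ ≠ g' (g β₁) := by
    intro h
    apply hβne
    apply g'.injective
    rw [hg', ← h]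
  have hWcc := vcong_isConvexCongruence G δ (g' (g β₁))
  have hWV : relLe (Vcong G δ (g' (g β₁))) (Vcong G δ₁ (g β₁)) := vcong_le G hVcc hV'
  -- The o-block `Δ'` of `V(δ, β'')` containing `δ` lies in `Γ`.
  have hΔ'T : InT G {γ | Vcong G δ (g' (g β₁)) δ γ} :=
    ⟨Vcong G δ (g' (g β₁)), ⟨δ, g' (g β₁), hδβ'', rfl⟩, δ, rfl⟩
  have hΔ'Γ : {γ | Vcong G δ (g' (g β₁)) δ γ} ⊆ Γ := by
    intro γ hγ
    rw [hΓeq]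
    exact ⟨Vcong G δ₁ (g β₁), hVcc, hVK, hVneK, hWV _ _ hγ⟩
  have hδΔ' : δ ∈ {γ | Vcong G δ (g' (g β₁)) δ γ} := hWcc.1.refl δ
  have hβ''Δ' : g' (g β₁) ∈ {γ | Vcong G δ (g' (g β₁)) δ γ} := vcong_self G δ (g' (g β₁))
  -- Apply ampleness to `Δ'`.
  obtain ⟨h, ⟨hhG, hsupp⟩, αq, hαqΔ', hQ⟩ := hample _ hΔ'T
  have hne1 : h ≠ 1 := by
    rintro rfl
    have h1 : (1 : Ω ≃o Ω) αq = αq := rfl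
    rw [h1] at hQ
    have h2 : δ ∈ {γ | Vcong G αq αq αq γ} := hQ ▸ hδΔ'
    have h3 : g' (g β₁) ∈ {γ | Vcong G αq αq αq γ} := hQ ▸ hβ''Δ'
    exact hδβ'' ((vcong_diag G h2).symm.trans (vcong_diag G h3))
  intro hrst
  apply hne1
  have hmem : h ∈ rst G Γ := ⟨hhG, hsupp.trans hΔ'Γ⟩
  rw [hrst] at hmem
  exact hmem

end LPerm
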